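/- Let x₁, x₂ ∈ ℤ[ω] satisfy x̄₁·x₁ ≡ x̄₂·x₂ (mod 2), where x̄ denotes complex conjugation. Then there exists m ∈ {0, 1, ..., 7} such that both (x₁ + ω^m·x₂)/√2 ∈ ℤ[ω] and (x₁ − ω^m·x₂)/√2 ∈ ℤ[ω]. -/

import Mathlib

noncomputable section

/-- The eighth root of unity `ω = e^{iπ/4} = (1+i)/√2`. -/
def ω : ℂ := (1 + Complex.I) / Real.sqrt 2

/-- A rational number is dyadic if it has the form `a / 2^n` with `a ∈ ℤ`, `n ∈ ℕ`. -/
def IsDyadic (q : ℚ) : Prop := ∃ (a : ℤ) (n : ℕ), q = a / 2 ^ n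

/-- Membership in the ring `𝔻[ω] = ℤ[1/√2, i]`: complex numbers of the form
`aω³ + bω² + cω + d` with `a, b, c, d` dyadic rationals. -/
def inDω (t : ℂ) : Prop :=
  ∃ a b c d : ℚ, IsDyadic a ∧ IsDyadic b ∧ IsDyadic c ∧ IsDyadic d ∧
    t = (a : ℂ) * ω ^ 3 + (b : ℂ) * ω ^ 2 + (c : ℂ) * ω + (d : ℂ)

/-- Membership in the ring `ℤ[ω]`: complex numbers of the form
`aω³ + bω² + cω + d` with `a, b, c, d ∈ ℤ`. -/
def inZω (t : ℂ) : Prop :=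
  ∃ a b c d : ℤ, t = (a : ℂ) * ω ^ 3 + (b : ℂ) * ω ^ 2 + (c : ℂ) * ω + (d : ℂ)

/-! Write `x = aω³ + bω² + cω + d`. Then `x / √2 ∈ ℤ[ω]` as soon as `a ≡ c` and `b ≡ d (mod 2)`,
so the class of `x` modulo `√2` is recorded by the pair `(a + c, b + d)` over `𝔽₂`, and
multiplication by `ω` swaps its two entries. Since
`x̄x = (a² + b² + c² + d²) + (ab + bc + cd − ad)√2` and `1, ω, ω², ω³` are linearly independent
over `ℤ`, the hypothesis says that the pairs of `x₁` and `x₂` have the same sum and the same product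
in `𝔽₂`; hence they agree up to a swap, and `m = 0` or `m = 1` works. -/

open ComplexConjugate

lemma ofReal_sqrt_two_ne_zero : (√2 : ℂ) ≠ 0 := by
  exact_mod_cast Real.sqrt_ne_zero'.mpr two_pos

lemma ofReal_sqrt_two_sq : (√2 : ℂ) ^ 2 = 2 := by
  exact_mod_cast Real.sq_sqrt zero_le_two

lemma ω_eq : ω = ((√2 / 2 : ℝ) : ℂ) + ((√2 / 2 : ℝ) : ℂ) * Complex.I := by
  have := ofReal_sqrt_two_ne_zero
  unfold ω
  push_cast
  field_simp
  linear_combination -(1 + Complex.I) * ofReal_sqrt_two_sq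

lemma ω_sq : ω ^ 2 = Complex.I := by
  rw [ω_eq]
  push_cast
  linear_combination (1 + Complex.I) ^ 2 / 4 * ofReal_sqrt_two_sq + Complex.I_sq / 2

lemma ω_pow_four : ω ^ 4 = -1 := by
  rw [show ω ^ 4 = (ω ^ 2) ^ 2 by ring, ω_sq, Complex.I_sq]

lemma sqrt_two_eq_ω_sub_ω_pow_three : (√2 : ℂ) = ω - ω ^ 3 := by
  rw [pow_succ, ω_sq, ω_eq]
  push_cast
  linear_combination (√2 / 2 : ℂ) * Complex.I_sq

lemma conj_ω : conj ω = -ω ^ 3 := by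
  rw [pow_succ, ω_sq, ω_eq]
  simp only [map_add, map_mul, Complex.conj_ofReal, Complex.conj_I]
  linear_combination ((√2 / 2 : ℝ) : ℂ) * Complex.I_sq

lemma int_eq_zero_of_add_mul_sqrt_two_eq_zero {m n : ℤ} (h : (m : ℝ) + n * √2 = 0) :
    m = 0 ∧ n = 0 := by
  obtain rfl | hn := eq_or_ne n 0
  · exact ⟨by simpa using h, rfl⟩
  · exact absurd h ((irrational_sqrt_two.intCast_mul hn).intCast_add m).ne_zero

def ofCoeffs (a b c d : ℤ) : ℂ := a * ω ^ 3 + b * ω ^ 2 + c * ω + d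

lemma inZω_iff_exists_ofCoeffs {t : ℂ} : inZω t ↔ ∃ a b c d, t = ofCoeffs a b c d := Iff.rfl

lemma ofCoeffs_add (a b c d a' b' c' d' : ℤ) :
    ofCoeffs a b c d + ofCoeffs a' b' c' d' = ofCoeffs (a + a') (b + b') (c + c') (d + d') := by
  simp only [ofCoeffs]; push_cast; ring

lemma ofCoeffs_sub (a b c d a' b' c' d' : ℤ) :
    ofCoeffs a b c d - ofCoeffs a' b' c' d' = ofCoeffs (a - a') (b - b') (c - c') (d - d') := by
  simp only [ofCoeffs]; push_cast; ring

lemma two_mul_ofCoeffs (a b c d : ℤ) :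
    2 * ofCoeffs a b c d = ofCoeffs (2 * a) (2 * b) (2 * c) (2 * d) := by
  simp only [ofCoeffs]; push_cast; ring

lemma ω_mul_ofCoeffs (a b c d : ℤ) : ω * ofCoeffs a b c d = ofCoeffs b c d (-a) := by
  simp only [ofCoeffs]; push_cast; linear_combination (a : ℂ) * ω_pow_four

lemma sqrt_two_mul_ofCoeffs (a b c d : ℤ) :
    (√2 : ℂ) * ofCoeffs a b c d = ofCoeffs (b - d) (c + a) (d + b) (c - a) := by
  simp only [ofCoeffs, sqrt_two_eq_ω_sub_ω_pow_three]; push_cast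
  linear_combination (a - c - a * ω ^ 2 - b * ω : ℂ) * ω_pow_four

lemma conj_ofCoeffs (a b c d : ℤ) : conj (ofCoeffs a b c d) = ofCoeffs (-c) (-b) (-a) d := by
  have conj_ω_sq : conj (ω ^ 2) = -ω ^ 2 := by
    rw [map_pow, conj_ω]; linear_combination ω ^ 2 * ω_pow_four
  have conj_ω_cube : conj (ω ^ 3) = -ω := by
    rw [map_pow, conj_ω]; linear_combination (ω - ω ^ 5) * ω_pow_four
  simp only [ofCoeffs, map_add, map_mul, map_intCast, conj_ω, conj_ω_sq, conj_ω_cube]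
  push_cast; ring

lemma conj_mul_self_ofCoeffs (a b c d : ℤ) :
    conj (ofCoeffs a b c d) * ofCoeffs a b c d =
      ofCoeffs (-(a * b + b * c + c * d - a * d)) 0 (a * b + b * c + c * d - a * d)
        (a ^ 2 + b ^ 2 + c ^ 2 + d ^ 2) := by
  rw [conj_ofCoeffs]; simp only [ofCoeffs]; push_cast
  linear_combination (-(a * c * ω ^ 2) - (a * b + b * c) * ω - (a ^ 2 + b ^ 2 + c ^ 2) : ℂ) *
    ω_pow_four

lemma ofCoeffs_eq_ofReal_add_ofReal_mul_I (a b c d : ℤ) :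
    ofCoeffs a b c d =
      ((d + (c - a) * √2 / 2 : ℝ) : ℂ) + ((b + (a + c) * √2 / 2 : ℝ) : ℂ) * Complex.I := by
  rw [ofCoeffs, pow_succ, ω_sq, ω_eq]; push_cast
  linear_combination (a * √2 / 2 : ℂ) * Complex.I_sq

lemma eq_of_ofCoeffs_eq {a b c d a' b' c' d' : ℤ}
    (h : ofCoeffs a b c d = ofCoeffs a' b' c' d') : a = a' ∧ b = b' ∧ c = c' ∧ d = d' := by
  rw [← sub_eq_zero, ofCoeffs_sub, ofCoeffs_eq_ofReal_add_ofReal_mul_I, Complex.ext_iff] at h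
  simp only [Complex.add_re, Complex.add_im, Complex.ofReal_re, Complex.ofReal_im,
    Complex.mul_re, Complex.mul_im, Complex.I_re, Complex.I_im, Complex.zero_re, Complex.zero_im] at h
  obtain ⟨hre, him⟩ := h
  push_cast at hre him
  obtain ⟨h₁, h₂⟩ := int_eq_zero_of_add_mul_sqrt_two_eq_zero
    (m := 2 * (d - d')) (n := (c - c') - (a - a')) (by push_cast; linarith)
  obtain ⟨h₃, h₄⟩ := int_eq_zero_of_add_mul_sqrt_two_eq_zero
    (m := 2 * (b - b')) (n := (a - a') + (c - c')) (by push_cast; linarith)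
  omega

lemma inZω_ofCoeffs_div_sqrt_two {a b c d : ℤ} (hac : a ≡ c [ZMOD 2]) (hbd : b ≡ d [ZMOD 2]) :
    inZω (ofCoeffs a b c d / √2) := by
  obtain ⟨k, hk⟩ := hac.dvd
  obtain ⟨l, hl⟩ := hbd.dvd
  refine inZω_iff_exists_ofCoeffs.mpr ⟨-l, a + k, b + l, k, ?_⟩
  rw [div_eq_iff ofReal_sqrt_two_ne_zero, mul_comm, sqrt_two_mul_ofCoeffs]
  congr 1 <;> omega

lemma inZω_add_sub_div_sqrt_two {a₁ b₁ c₁ d₁ a₂ b₂ c₂ d₂ : ℤ}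
    (hac : a₁ + c₁ ≡ a₂ + c₂ [ZMOD 2]) (hbd : b₁ + d₁ ≡ b₂ + d₂ [ZMOD 2]) :
    inZω ((ofCoeffs a₁ b₁ c₁ d₁ + ofCoeffs a₂ b₂ c₂ d₂) / √2) ∧
      inZω ((ofCoeffs a₁ b₁ c₁ d₁ - ofCoeffs a₂ b₂ c₂ d₂) / √2) := by
  rw [ofCoeffs_add, ofCoeffs_sub]
  unfold Int.ModEq at hac hbd
  constructor <;> apply inZω_ofCoeffs_div_sqrt_two <;> unfold Int.ModEq <;> omega

lemma eq_and_eq_or_eq_and_eq_of_add_eq_of_mul_eq {R : Type*} [CommRing R] [NoZeroDivisors R]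
    {u₁ v₁ u₂ v₂ : R} (hadd : u₁ + v₁ = u₂ + v₂) (hmul : u₁ * v₁ = u₂ * v₂) :
    u₁ = u₂ ∧ v₁ = v₂ ∨ u₁ = v₂ ∧ v₁ = u₂ := by
  have h : (u₁ - u₂) * (u₁ - v₂) = 0 := by linear_combination u₁ * hadd - hmul
  rcases mul_eq_zero.mp h with h | h
  · exact .inl ⟨sub_eq_zero.mp h, by linear_combination hadd - h⟩
  · exact .inr ⟨sub_eq_zero.mp h, by linear_combination hadd - h⟩

lemma coeffSums_modEq_or_swap_of_inZω {a₁ b₁ c₁ d₁ a₂ b₂ c₂ d₂ : ℤ}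
    (h : inZω ((conj (ofCoeffs a₁ b₁ c₁ d₁) * ofCoeffs a₁ b₁ c₁ d₁ -
      conj (ofCoeffs a₂ b₂ c₂ d₂) * ofCoeffs a₂ b₂ c₂ d₂) / 2)) :
    (a₁ + c₁ ≡ a₂ + c₂ [ZMOD 2] ∧ b₁ + d₁ ≡ b₂ + d₂ [ZMOD 2]) ∨
      (a₁ + c₁ ≡ b₂ + d₂ [ZMOD 2] ∧ b₁ + d₁ ≡ a₂ + c₂ [ZMOD 2]) := by
  obtain ⟨p, q, r, s, hpqrs⟩ := inZω_iff_exists_ofCoeffs.mp h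
  rw [div_eq_iff two_ne_zero, mul_comm _ (2 : ℂ), two_mul_ofCoeffs, conj_mul_self_ofCoeffs,
    conj_mul_self_ofCoeffs, ofCoeffs_sub] at hpqrs
  obtain ⟨-, -, hM, hN⟩ := eq_of_ofCoeffs_eq hpqrs
  have parity (a b c d : ZMod 2) :
      a ^ 2 + b ^ 2 + c ^ 2 + d ^ 2 = (a + c) + (b + d) ∧
        a * b + b * c + c * d - a * d = (a + c) * (b + d) := by
    revert a b c d; decide
  have two_eq_zero : (2 : ZMod 2) = 0 := rfl
  have hadd : ((a₁ + c₁ : ℤ) : ZMod 2) + (b₁ + d₁ : ℤ) = (a₂ + c₂ : ℤ) + (b₂ + d₂ : ℤ) := by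
    have := congrArg (Int.cast : ℤ → ZMod 2) hN
    push_cast at this ⊢
    rw [← (parity _ _ _ _).1, ← (parity _ _ _ _).1]
    rwa [two_eq_zero, zero_mul, sub_eq_zero] at this
  have hmul : ((a₁ + c₁ : ℤ) : ZMod 2) * (b₁ + d₁ : ℤ) = (a₂ + c₂ : ℤ) * (b₂ + d₂ : ℤ) := by
    have := congrArg (Int.cast : ℤ → ZMod 2) hM
    push_cast at this ⊢
    rw [← (parity _ _ _ _).2, ← (parity _ _ _ _).2]
    rwa [two_eq_zero, zero_mul, sub_eq_zero] at this
  simpa only [ZMod.intCast_eq_intCast_iff, Nat.cast_ofNat] using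
    eq_and_eq_or_eq_and_eq_of_add_eq_of_mul_eq hadd hmul

/-- If `x₁, x₂ ∈ ℤ[ω]` satisfy `x̄₁x₁ ≡ x̄₂x₂ (mod 2)`, then there is `m ∈ {0,…,7}` with
`(x₁ + ω^m x₂)/√2 ∈ ℤ[ω]` and `(x₁ − ω^m x₂)/√2 ∈ ℤ[ω]`. -/
theorem stmt7 (x₁ x₂ : ℂ) (h₁ : inZω x₁) (h₂ : inZω x₂)
    (h : inZω (((starRingEnd ℂ) x₁ * x₁ - (starRingEnd ℂ) x₂ * x₂) / 2)) :
    ∃ m : ℕ, m ≤ 7 ∧ inZω ((x₁ + ω ^ m * x₂) / (Real.sqrt 2 : ℂ))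
      ∧ inZω ((x₁ - ω ^ m * x₂) / (Real.sqrt 2 : ℂ)) := by
  obtain ⟨a₁, b₁, c₁, d₁, rfl⟩ := inZω_iff_exists_ofCoeffs.mp h₁
  obtain ⟨a₂, b₂, c₂, d₂, rfl⟩ := inZω_iff_exists_ofCoeffs.mp h₂
  rcases coeffSums_modEq_or_swap_of_inZω h with ⟨hac, hbd⟩ | ⟨hac, hbd⟩
  · refine ⟨0, by norm_num, ?_⟩
    simpa only [pow_zero, one_mul] using inZω_add_sub_div_sqrt_two hac hbd
  · refine ⟨1, by norm_num, ?_⟩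
    rw [pow_one, ω_mul_ofCoeffs]
    refine inZω_add_sub_div_sqrt_two hac ?_
    unfold Int.ModEq at hbd ⊢
    omega
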